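/- Let K ≥ 2, a ∈ (0,∞)^K, let Δ := { x ∈ ℝ^{K−1} : x_i > 0 for all i and ∑_{i=1}^{K−1} x_i < 1 }, and for x ∈ Δ write x_K := 1 − ∑_{i=1}^{K−1} x_i. Then ∫_Δ ∏_{j=1}^K x_j^{a_j − 1} dx = ( ∏_{j=1}^K Γ(a_j) ) / Γ( ∑_{j=1}^K a_j ), the integral being with respect to (K−1)-dimensional Lebesgue measure. Consequently, for α ∈ (0,∞)^K with θ := ∑_j α_j and y ∈ ℕ^K, the y-th moment of the Dirichlet density (Γ(θ)/∏_j Γ(α_j)) ∏_{j=1}^K x_j^{α_j−1} on Δ equals (Γ(θ)/Γ(θ+|y|)) ∏_{j=1}^K Γ(α_j+y_j)/Γ(α_j), which is the unnormalised posterior weight appearing in the update formula (3.6) of Proposition 3.2. -/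

import Mathlib

open MeasureTheory Finset

/-- The open simplex `Δ = {x ∈ ℝ^d : xᵢ > 0, ∑ xᵢ < 1}`. -/
def simplexSet (d : ℕ) : Set (Fin d → ℝ) :=
  {x | (∀ i, 0 < x i) ∧ ∑ i, x i < 1}

/-- Extension of `x ∈ ℝ^{K-1}` to `ℝ^K` by appending `x_K := 1 - ∑_{i<K} x_i`. -/
noncomputable def extFun (K : ℕ) (x : Fin (K - 1) → ℝ) (j : Fin K) : ℝ :=
  if h : (j : ℕ) < K - 1 then x ⟨j, h⟩ else 1 - ∑ i, x i

open Set ProbabilityTheory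
open scoped ENNReal

/-!
Integrate out the last coordinate. Over a point `x` of the `d`-simplex, the fibre of the
`(d+1)`-simplex is the interval `(0, c)` with `c = 1 - ∑ xᵢ`, and the scaled Beta integral
`∫₀ᶜ t^(p-1) (c-t)^(s-1) dt = c^(p+s-1) B(p, s)` turns the integrand
`∏ xᵢ^(bᵢ-1) · (1 - ∑ xᵢ)^(s-1)` into one of the same shape in one dimension less, with `s`
replaced by `p + s`. Induction on the dimension telescopes the Beta factors into
`∏ Γ(aⱼ) / Γ(∑ aⱼ)`. Multiplying the density by `∏ xⱼ^yⱼ` shifts `a` to `a + y`, which gives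
the moments.
-/

theorem integral_Ioo_rpow_mul_rpow_sub {p q c : ℝ} (hp : 0 < p) (hq : 0 < q) (hc : 0 < c) :
    ∫ t in Ioo 0 c, t ^ (p - 1) * (c - t) ^ (q - 1) = c ^ (p + q - 1) * beta p q := by
  rw [← integral_Ioc_eq_integral_Ioo, ← intervalIntegral.integral_of_le hc.le]
  apply Complex.ofReal_injective
  have hB : ((beta p q : ℝ) : ℂ) = Complex.betaIntegral p q := by
    rw [Complex.betaIntegral_eq_Gamma_mul_div _ _ (by simpa) (by simpa), beta,
      ← Complex.ofReal_add, Complex.Gamma_ofReal, Complex.Gamma_ofReal, Complex.Gamma_ofReal]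
    push_cast; rfl
  rw [← intervalIntegral.integral_ofReal, Complex.ofReal_mul, hB, Complex.ofReal_cpow hc.le,
    show ((p + q - 1 : ℝ) : ℂ) = p + q - 1 by push_cast; rfl, ← Complex.betaIntegral_scaled _ _ hc]
  refine intervalIntegral.integral_congr fun t ht => ?_
  rw [uIcc_of_le hc.le] at ht
  rw [Complex.ofReal_mul, Complex.ofReal_cpow ht.1, Complex.ofReal_cpow (sub_nonneg.2 ht.2)]
  push_cast; rfl

theorem lintegral_Ioo_rpow_mul_rpow_sub {p q c : ℝ} (hp : 0 < p) (hq : 0 < q) (hc : 0 < c) :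
    ∫⁻ t in Ioo 0 c, ENNReal.ofReal (t ^ (p - 1) * (c - t) ^ (q - 1))
      = ENNReal.ofReal (c ^ (p + q - 1) * beta p q) := by
  have hI := integral_Ioo_rpow_mul_rpow_sub hp hq hc
  have hpos : 0 < c ^ (p + q - 1) * beta p q :=
    mul_pos (Real.rpow_pos_of_pos hc _) (beta_pos hp hq)
  -- the integrand is integrable because its integral is nonzero
  rw [← hI, ofReal_integral_eq_lintegral_ofReal (.of_integral_ne_zero (hI ▸ hpos.ne'))]
  exact ae_restrict_of_forall_mem measurableSet_Ioo fun t ht =>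
    mul_nonneg (Real.rpow_nonneg ht.1.le _) (Real.rpow_nonneg (sub_nonneg.2 ht.2.le) _)

theorem measurableSet_simplexSet (d : ℕ) : MeasurableSet (simplexSet d) := by
  simp only [simplexSet, ofPred_and, ofPred_forall]
  exact (MeasurableSet.iInter fun i =>
    measurableSet_lt measurable_const (measurable_pi_apply i)).inter
      (measurableSet_lt (by fun_prop) measurable_const)

theorem snoc_mem_simplexSet_iff {d : ℕ} {x : Fin d → ℝ} {t : ℝ} :
    (Fin.snoc x t : Fin (d + 1) → ℝ) ∈ simplexSet (d + 1) ↔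
      x ∈ simplexSet d ∧ t ∈ Ioo 0 (1 - ∑ i, x i) := by
  simp only [simplexSet, mem_ofPred_eq, Fin.forall_fin_succ', Fin.snoc_castSucc, Fin.snoc_last,
    Fin.sum_univ_castSucc, Set.mem_Ioo]
  constructor
  · rintro ⟨⟨hx, ht⟩, hsum⟩
    exact ⟨⟨hx, by linarith⟩, ht, by linarith⟩
  · rintro ⟨⟨hx, -⟩, ht, htc⟩
    exact ⟨⟨hx, ht⟩, by linarith⟩

theorem lintegral_simplexSet_succ (d : ℕ) {f : (Fin (d + 1) → ℝ) → ℝ≥0∞} (hf : Measurable f) :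
    ∫⁻ x in simplexSet (d + 1), f x
      = ∫⁻ x in simplexSet d, ∫⁻ t in Ioo 0 (1 - ∑ i, x i), f (Fin.snoc x t) := by
  set e := MeasurableEquiv.piFinSuccAbove (fun _ : Fin (d + 1) => ℝ) (Fin.last d)
  have he : ∀ z : ℝ × (Fin d → ℝ), e.symm z = Fin.snoc z.2 z.1 := fun z =>
    Fin.insertNth_last' z.1 z.2
  have hF := hf.indicator (measurableSet_simplexSet (d + 1))
  rw [← lintegral_indicator (measurableSet_simplexSet _),
    ← ((volume_preserving_piFinSuccAbove (fun _ => ℝ) (Fin.last d)).symm e).lintegral_comp hF,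
    Measure.volume_eq_prod,
    lintegral_prod_symm' (fun z => (simplexSet (d + 1)).indicator f (e.symm z))
      (hF.comp e.symm.measurable),
    ← lintegral_indicator (measurableSet_simplexSet d)]
  refine lintegral_congr fun x => ?_
  by_cases hx : x ∈ simplexSet d
  · simp only [indicator_of_mem hx, he]
    rw [← lintegral_indicator measurableSet_Ioo]
    congr 1 with t
    simp only [indicator, snoc_mem_simplexSet_iff, hx, true_and]
  · simp [he, snoc_mem_simplexSet_iff, hx]

theorem lintegral_Ioo_prod_snoc_rpow_mul_rpow {d : ℕ} {b : Fin (d + 1) → ℝ} {s : ℝ}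
    (hp : 0 < b (Fin.last d)) (hs : 0 < s) {x : Fin d → ℝ} (hx : x ∈ simplexSet d) :
    ∫⁻ t in Ioo 0 (1 - ∑ i, x i), ENNReal.ofReal
        ((∏ i, (Fin.snoc x t : Fin (d + 1) → ℝ) i ^ (b i - 1)) *
          (1 - ∑ i, (Fin.snoc x t : Fin (d + 1) → ℝ) i) ^ (s - 1))
      = ENNReal.ofReal ((∏ i, x i ^ (b i.castSucc - 1)) *
            (1 - ∑ i, x i) ^ (b (Fin.last d) + s - 1)) *
          ENNReal.ofReal (beta (b (Fin.last d)) s) := by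
  obtain ⟨hx, hsum⟩ := hx
  have hC : 0 ≤ ∏ i, x i ^ (b i.castSucc - 1) :=
    prod_nonneg fun i _ => Real.rpow_nonneg (hx i).le _
  have hsplit : ∀ t : ℝ,
      (∏ i, (Fin.snoc x t : Fin (d + 1) → ℝ) i ^ (b i - 1)) *
          (1 - ∑ i, (Fin.snoc x t : Fin (d + 1) → ℝ) i) ^ (s - 1)
        = (∏ i, x i ^ (b i.castSucc - 1)) *
            (t ^ (b (Fin.last d) - 1) * ((1 - ∑ i, x i) - t) ^ (s - 1)) := fun t => by
    simp only [Fin.prod_univ_castSucc, Fin.sum_univ_castSucc, Fin.snoc_castSucc,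
      Fin.snoc_last, sub_add_eq_sub_sub, mul_assoc]
  simp_rw [hsplit, ENNReal.ofReal_mul hC]
  rw [lintegral_const_mul' _ _ ENNReal.ofReal_ne_top,
    lintegral_Ioo_rpow_mul_rpow_sub hp hs (sub_pos.2 hsum),
    ENNReal.ofReal_mul (Real.rpow_nonneg (sub_nonneg.2 hsum.le) _), mul_assoc]

theorem lintegral_simplexSet_prod_rpow_mul_rpow (d : ℕ) {b : Fin d → ℝ} {s : ℝ}
    (hb : ∀ i, 0 < b i) (hs : 0 < s) :
    ∫⁻ x in simplexSet d, ENNReal.ofReal ((∏ i, x i ^ (b i - 1)) * (1 - ∑ i, x i) ^ (s - 1))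
      = ENNReal.ofReal ((∏ i, Real.Gamma (b i)) * Real.Gamma s / Real.Gamma (∑ i, b i + s)) := by
  induction d generalizing s with
  | zero =>
    have hΔ : simplexSet 0 = univ := by ext; simp [simplexSet]
    simp [hΔ, volume_pi, (Real.Gamma_pos_of_pos hs).ne']
  | succ d ih =>
    have hp : 0 < b (Fin.last d) := hb _
    rw [lintegral_simplexSet_succ d (by fun_prop),
      setLIntegral_congr_fun (measurableSet_simplexSet d) fun x hx =>
        lintegral_Ioo_prod_snoc_rpow_mul_rpow hp hs hx,
      lintegral_mul_const' _ _ ENNReal.ofReal_ne_top, ih (fun i => hb _) (add_pos hp hs),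
      ← ENNReal.ofReal_mul' (beta_pos hp hs).le]
    congr 1
    have hΓ := Real.Gamma_pos_of_pos (add_pos hp hs)
    simp only [beta, Fin.prod_univ_castSucc, Fin.sum_univ_castSucc]
    field_simp
    ring_nf

theorem extFun_succ (d : ℕ) (x : Fin d → ℝ) : extFun (d + 1) x = Fin.snoc x (1 - ∑ i, x i) := by
  funext j
  induction j using Fin.lastCases with
  | last => simp [extFun]
  | cast i => simp [extFun, Fin.snoc_castSucc]

theorem extFun_pos {d : ℕ} {x : Fin d → ℝ} (hx : x ∈ simplexSet d) (j : Fin (d + 1)) :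
    0 < extFun (d + 1) x j := by
  rw [extFun_succ]
  induction j using Fin.lastCases with
  | last => simpa using hx.2
  | cast i => simpa using hx.1 i

theorem integral_simplexSet_prod_extFun_rpow (d : ℕ) {a : Fin (d + 1) → ℝ} (ha : ∀ j, 0 < a j) :
    ∫ x in simplexSet d, ∏ j, extFun (d + 1) x j ^ (a j - 1)
      = (∏ j, Real.Gamma (a j)) / Real.Gamma (∑ j, a j) := by
  have hsplit : ∀ x : Fin d → ℝ, ∏ j, extFun (d + 1) x j ^ (a j - 1)
      = (∏ i, x i ^ (a i.castSucc - 1)) * (1 - ∑ i, x i) ^ (a (Fin.last d) - 1) := by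
    simp [extFun_succ, Fin.prod_univ_castSucc]
  rw [integral_eq_lintegral_of_nonneg_ae
      (ae_restrict_of_forall_mem (measurableSet_simplexSet d) fun x hx =>
        prod_nonneg fun j _ => Real.rpow_nonneg (extFun_pos hx j).le _)
      (by simp_rw [hsplit]; fun_prop)]
  simp_rw [hsplit]
  rw [lintegral_simplexSet_prod_rpow_mul_rpow d (fun i => ha _) (ha _),
    ← Fin.prod_univ_castSucc (f := fun j => Real.Gamma (a j)), ← Fin.sum_univ_castSucc (f := a),
    ENNReal.toReal_ofReal]
  exact div_nonneg (prod_nonneg fun j _ => (Real.Gamma_pos_of_pos (ha j)).le)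
    (Real.Gamma_pos_of_pos (sum_pos (fun j _ => ha j) univ_nonempty)).le

theorem integral_simplexSet_prod_extFun_rpow_mul_pow (d : ℕ) {a : Fin (d + 1) → ℝ}
    (ha : ∀ j, 0 < a j) (y : Fin (d + 1) → ℕ) :
    ∫ x in simplexSet d, (∏ j, extFun (d + 1) x j ^ (a j - 1)) * ∏ j, extFun (d + 1) x j ^ y j
      = (∏ j, Real.Gamma (a j + y j)) / Real.Gamma (∑ j, a j + ∑ j, (y j : ℝ)) := by
  have hmerge : ∀ x ∈ simplexSet d,
      (∏ j, extFun (d + 1) x j ^ (a j - 1)) * ∏ j, extFun (d + 1) x j ^ y j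
        = ∏ j, extFun (d + 1) x j ^ ((a j + y j) - 1) := fun x hx => by
    rw [← prod_mul_distrib]
    refine prod_congr rfl fun j _ => ?_
    rw [← Real.rpow_natCast, ← Real.rpow_add (extFun_pos hx j)]
    ring_nf
  rw [setIntegral_congr_fun (measurableSet_simplexSet d) hmerge,
    integral_simplexSet_prod_extFun_rpow d fun j =>
      add_pos_of_pos_of_nonneg (ha j) (y j).cast_nonneg,
    sum_add_distrib]

theorem stmt14 (K : ℕ) (hK : 2 ≤ K) (a : Fin K → ℝ) (ha : ∀ j, 0 < a j) :
    (∫ x in simplexSet (K - 1), ∏ j, extFun K x j ^ (a j - 1))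
      = (∏ j, Real.Gamma (a j)) / Real.Gamma (∑ j, a j)
    ∧ ∀ y : Fin K → ℕ,
      (∫ x in simplexSet (K - 1),
          (Real.Gamma (∑ j, a j) / ∏ j, Real.Gamma (a j)) *
            (∏ j, extFun K x j ^ (a j - 1)) * ∏ j, extFun K x j ^ (y j))
        = Real.Gamma (∑ j, a j) / Real.Gamma ((∑ j, a j) + ∑ j, (y j : ℝ)) *
            ∏ j, (Real.Gamma (a j + y j) / Real.Gamma (a j)) := by
  obtain ⟨d, rfl⟩ : ∃ d, K = d + 1 := ⟨K - 1, by omega⟩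
  refine ⟨integral_simplexSet_prod_extFun_rpow d ha, fun y => ?_⟩
  have hΓ : ∏ j, Real.Gamma (a j) ≠ 0 :=
    prod_ne_zero_iff.2 fun j _ => (Real.Gamma_pos_of_pos (ha j)).ne'
  simp only [mul_assoc]
  rw [integral_const_mul]
  refine (congrArg _ (integral_simplexSet_prod_extFun_rpow_mul_pow d ha y)).trans ?_
  rw [prod_div_distrib]
  field_simp
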